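/- arXiv:2501.13803 — 3 statements merged into one kernel-verified Lean document; each statement's English description precedes it below -/
import Mathlib

section
/- Let Γ be a finite group acting freely on a finite connected graph X with first Betti number at least 2. Then the induced action of Γ on H₁(X, ℤ) is faithful. -/
/-!
Suppose `γ ≠ 1` fixes every integral, hence every rational, `1`-cycle, i.e. acts trivially on
`Z = ker ∂` for the boundary map `∂ : ℚ^E → ℚ^V`. Acting freely, `γ` permutes edges and vertices
without fixed points, so its traces on `ℚ^E` and on `ℚ^V` vanish. The graph being connected,
`γ` also acts trivially on `coker ∂ ≅ H₀(X, ℚ)`, so the Hopf trace formula for the complex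
`ℚ^E → ℚ^V` gives `0 = tr(γ | Z) - tr(γ | coker ∂) = dim Z - dim H₀`, whence `b₁ = dim H₀ ≤ 1`.
-/

open LinearMap Submodule Module Finset

namespace LinearMap

variable {K M N : Type*} [Field K] [AddCommGroup M] [Module K M] [AddCommGroup N] [Module K N]

theorem trace_mapQ_ker_eq_trace_restrict_range (D : M →ₗ[K] N) {f : M →ₗ[K] M}
    {g : N →ₗ[K] N} (hD : D ∘ₗ f = g ∘ₗ D) (hf : ∀ x ∈ ker D, f x ∈ ker D)
    (hg : ∀ y ∈ range D, g y ∈ range D) :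
    trace K (M ⧸ ker D) ((ker D).mapQ (ker D) f hf) = trace K (range D) (g.restrict hg) := by
  have hconj : D.quotKerEquivRange.conj ((ker D).mapQ (ker D) f hf) = g.restrict hg := by
    ext y
    obtain ⟨x, rfl⟩ := D.quotKerEquivRange.surjective y
    obtain ⟨x, rfl⟩ := (ker D).mkQ_surjective x
    simpa using congr($hD x)
  rw [← hconj, trace_conj']

theorem trace_funLeft {R ι : Type*} [CommSemiring R] [Fintype ι] [DecidableEq ι] (φ : ι → ι) :
    trace R (ι → R) (funLeft R R φ) = #{i | φ i = i} := by
  rw [trace_eq_matrix_trace R (Pi.basisFun R ι), Matrix.trace, card_filter]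
  push_cast
  refine sum_congr rfl fun i _ => ?_
  simp [Pi.single_apply]

variable [FiniteDimensional K M] [FiniteDimensional K N]

theorem trace_eq_trace_restrict_add_trace_mapQ (p : Submodule K M) (f : M →ₗ[K] M)
    (hf : ∀ x ∈ p, f x ∈ p) :
    trace K M f = trace K p (f.restrict hf) + trace K (M ⧸ p) (p.mapQ p f hf) := by
  obtain ⟨q, hpq⟩ := p.exists_isCompl
  let π := p.projectionOnto q hpq
  let σ := q.projectionOnto p hpq.symm
  have hsplit : f = (f ∘ₗ p.subtype) ∘ₗ π + (f ∘ₗ q.subtype) ∘ₗ σ := by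
    ext x
    simp only [add_apply, comp_apply, ← map_add, Submodule.subtype_apply]
    exact congrArg f (p.projection_add_projection_eq_self hpq x).symm
  have hπ : π ∘ₗ f ∘ₗ p.subtype = f.restrict hf := by
    ext x
    exact congrArg Subtype.val (p.projectionOnto_apply_left hpq ⟨f x, hf x x.2⟩)
  have hσ : (p.quotientEquivOfIsCompl q hpq).conj (p.mapQ p f hf) = σ ∘ₗ f ∘ₗ q.subtype := by
    ext x
    rfl
  conv_lhs => rw [hsplit]
  rw [map_add, trace_comp_comm', trace_comp_comm' σ, hπ, ← hσ, trace_conj']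

/-- The Hopf trace formula for a two-term complex `M → N`. -/
theorem trace_sub_trace_eq_of_comp_eq_comp (D : M →ₗ[K] N) {f : M →ₗ[K] M}
    {g : N →ₗ[K] N} (hD : D ∘ₗ f = g ∘ₗ D) (hf : ∀ x ∈ ker D, f x ∈ ker D)
    (hg : ∀ y ∈ range D, g y ∈ range D) :
    trace K M f - trace K N g =
      trace K (ker D) (f.restrict hf) - trace K (N ⧸ range D) ((range D).mapQ _ g hg) := by
  rw [trace_eq_trace_restrict_add_trace_mapQ _ f hf, trace_eq_trace_restrict_add_trace_mapQ _ g hg,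
    trace_mapQ_ker_eq_trace_restrict_range D hD hf hg]
  ring

end LinearMap

section GraphChains

variable (R : Type*) {V E : Type*} [CommRing R] [Fintype E] [DecidableEq V] (s t : E → V)

def graphBoundary : (E → R) →ₗ[R] (V → R) where
  toFun c v := ∑ e, c e * ((if t e = v then 1 else 0) - (if s e = v then 1 else 0))
  map_add' x y := by ext v; simp [add_mul, sum_add_distrib]
  map_smul' r x := by ext v; simp [mul_sum, mul_assoc]

def GraphConnected : Prop :=
  ∀ v w : V, Relation.EqvGen (fun a b => ∃ e : E, (s e = a ∧ t e = b) ∨ (s e = b ∧ t e = a)) v w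

variable {R s t}

theorem graphBoundary_apply (c : E → R) (v : V) :
    graphBoundary R s t c v =
      ∑ e, c e * ((if t e = v then 1 else 0) - (if s e = v then 1 else 0)) := rfl

theorem graphBoundary_single [DecidableEq E] (e : E) :
    graphBoundary R s t (Pi.single e 1) = Pi.single (t e) 1 - Pi.single (s e) 1 := by
  ext v
  simp [graphBoundary_apply, Pi.single_apply, eq_comm]

theorem graphBoundary_intCast (c : E → ℤ) :
    graphBoundary R s t (Int.cast ∘ c) = Int.cast ∘ graphBoundary ℤ s t c := by
  ext v
  simp [graphBoundary_apply, apply_ite (Int.cast : ℤ → R)]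

theorem graphBoundary_comp_funLeft_smul {G : Type*} [Group G] [MulAction G V] [MulAction G E]
    (hs : ∀ (g : G) e, s (g • e) = g • s e) (ht : ∀ (g : G) e, t (g • e) = g • t e) (g : G) :
    graphBoundary R s t ∘ₗ funLeft R R (g • ·) = funLeft R R (g • ·) ∘ₗ graphBoundary R s t := by
  ext c v
  simp only [comp_apply, funLeft_apply, graphBoundary_apply]
  refine Fintype.sum_equiv (MulAction.toPerm g) _ _ fun e => ?_
  simp [hs, ht, MulAction.toPerm_apply, smul_left_cancel_iff]

theorem single_sub_single_mem_range_graphBoundary (hconn : GraphConnected s t) (a b : V) :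
    Pi.single b (1 : R) - Pi.single a 1 ∈ range (graphBoundary R s t) := by
  classical
  induction hconn a b with
  | rel x y hxy =>
    obtain ⟨e, ⟨rfl, rfl⟩ | ⟨rfl, rfl⟩⟩ := hxy
    · exact ⟨_, graphBoundary_single e⟩
    · rw [← neg_sub]
      exact neg_mem ⟨_, graphBoundary_single e⟩
  | refl x => simp
  | symm x y _ ih =>
    rw [← neg_sub]
    exact neg_mem ih
  | trans x y z _ _ ihxy ihyz =>
    rw [← sub_add_sub_cancel]
    exact add_mem ihyz ihxy

variable [Fintype V]

theorem mem_range_graphBoundary_of_sum_eq_zero (hconn : GraphConnected s t) {x : V → R}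
    (hx : ∑ v, x v = 0) : x ∈ range (graphBoundary R s t) := by
  cases isEmpty_or_nonempty V
  · simp [Subsingleton.elim x 0]
  obtain ⟨v₀⟩ := ‹Nonempty V›
  have hx' : x = ∑ v, x v • (Pi.single v 1 - Pi.single v₀ 1) := by
    simp only [smul_sub, sum_sub_distrib, ← sum_smul, hx, zero_smul, sub_zero]
    ext v
    simp [Pi.single_apply]
  rw [hx']
  exact sum_mem fun v _ => smul_mem _ _ (single_sub_single_mem_range_graphBoundary hconn v₀ v)

theorem mapQ_range_graphBoundary_funLeft_smul_eq_id (hconn : GraphConnected s t) {G : Type*}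
    [Group G] [MulAction G V] (g : G)
    (hg : ∀ y ∈ range (graphBoundary R s t), funLeft R R (g • ·) y ∈ range (graphBoundary R s t)) :
    (range (graphBoundary R s t)).mapQ (range (graphBoundary R s t)) (funLeft R R (g • ·)) hg =
      LinearMap.id := by
  refine linearMap_qext _ (LinearMap.ext fun x => (Submodule.Quotient.eq _).mpr ?_)
  refine mem_range_graphBoundary_of_sum_eq_zero hconn ?_
  simp only [Pi.sub_apply, funLeft_apply, sum_sub_distrib, sub_eq_zero]
  exact Equiv.sum_comp (MulAction.toPerm g) x

theorem finrank_quotient_range_graphBoundary_le_one (hconn : GraphConnected s t) {K : Type*}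
    [Field K] : finrank K ((V → K) ⧸ range (graphBoundary K s t)) ≤ 1 := by
  cases isEmpty_or_nonempty V
  · exact (finrank_quotient_le _).trans (by simp)
  obtain ⟨v₀⟩ := ‹Nonempty V›
  refine finrank_le_one (Submodule.Quotient.mk (Pi.single v₀ 1)) fun y => ?_
  obtain ⟨x, rfl⟩ := Submodule.Quotient.mk_surjective _ y
  refine ⟨∑ v, x v, ?_⟩
  rw [← Submodule.Quotient.mk_smul, Submodule.Quotient.eq]
  refine mem_range_graphBoundary_of_sum_eq_zero hconn ?_
  simp [Pi.single_apply]

theorem finrank_ker_graphBoundary_le_one (hconn : GraphConnected s t) {K G : Type*} [Field K]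
    [CharZero K] [Group G] [MulAction G V] [MulAction G E]
    (hs : ∀ (g : G) e, s (g • e) = g • s e) (ht : ∀ (g : G) e, t (g • e) = g • t e) (g : G)
    (hfreeV : ∀ v : V, g • v ≠ v) (hfreeE : ∀ e : E, g • e ≠ e)
    (hfix : ∀ x ∈ ker (graphBoundary K s t), funLeft K K (g • ·) x = x) :
    finrank K (ker (graphBoundary K s t)) ≤ 1 := by
  classical
  set D := graphBoundary K s t
  have hD := graphBoundary_comp_funLeft_smul (R := K) hs ht g
  have hker : ∀ x ∈ ker D, funLeft K K (g • ·) x ∈ ker D := fun x hx => (hfix x hx).symm ▸ hx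
  have hrange : ∀ y ∈ range D, funLeft K K (g • ·) y ∈ range D := by
    rintro _ ⟨x, rfl⟩
    exact ⟨_, congr($hD x)⟩
  have hrestrict : (funLeft K K (g • ·)).restrict hker = LinearMap.id :=
    LinearMap.ext fun x => Subtype.ext (hfix x x.2)
  have hopf := trace_sub_trace_eq_of_comp_eq_comp D hD hker hrange
  rw [trace_funLeft, trace_funLeft, hrestrict, mapQ_range_graphBoundary_funLeft_smul_eq_id hconn,
    trace_id, trace_id] at hopf
  simp only [hfreeV, hfreeE, filter_false, card_empty, Nat.cast_zero, sub_zero] at hopf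
  have : finrank K (ker D) = finrank K ((V → K) ⧸ range D) := by
    exact_mod_cast (sub_eq_zero.mp hopf.symm)
  exact this ▸ finrank_quotient_range_graphBoundary_le_one hconn

end GraphChains

theorem exists_intCast_eq_smul {ι : Type*} [Finite ι] (x : ι → ℚ) :
    ∃ d : ℚ, d ≠ 0 ∧ ∃ c : ι → ℤ, Int.cast ∘ c = d • x := by
  obtain ⟨⟨b, hb⟩, hbx⟩ := IsLocalization.exist_integer_multiples_of_finite (nonZeroDivisors ℤ) x
  choose c hc using hbx
  refine ⟨b, by exact_mod_cast nonZeroDivisors.ne_zero hb, c, funext fun i => ?_⟩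
  simpa [zsmul_eq_mul] using hc i

section RationalCycles

variable {V E : Type*} [Fintype E] [DecidableEq V] {s t : E → V}

theorem funLeft_eq_self_of_forall_int_cycle (φ : E → E)
    (h : ∀ c ∈ ker (graphBoundary ℤ s t), funLeft ℤ ℤ φ c = c) :
    ∀ x ∈ ker (graphBoundary ℚ s t), funLeft ℚ ℚ φ x = x := by
  intro x hx
  obtain ⟨d, hd, c, hc⟩ := exists_intCast_eq_smul x
  have hcycle : c ∈ ker (graphBoundary ℤ s t) := by
    have : Int.cast ∘ graphBoundary ℤ s t c = (0 : V → ℚ) := by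
      rw [← graphBoundary_intCast, hc, map_smul, mem_ker.mp hx, smul_zero]
    ext v
    simpa using congr_fun this v
  apply smul_right_injective _ hd
  simp only [← map_smul, ← hc]
  ext e
  simpa using congr_arg (Int.cast : ℤ → ℚ) (congr_fun (h c hcycle) e)

theorem card_le_finrank_ker_graphBoundary {ι : Type*} [Fintype ι] (c : ι → E → ℤ)
    (hc : ∀ i, c i ∈ ker (graphBoundary ℤ s t)) (hli : LinearIndependent ℤ c) :
    Fintype.card ι ≤ finrank ℚ (ker (graphBoundary ℚ s t)) := by
  let cast : (E → ℤ) →ₗ[ℤ] (E → ℚ) := (Algebra.linearMap ℤ ℚ).compLeft E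
  have hcast : Function.Injective cast := fun x y hxy => funext fun e => by
    simpa [cast] using congr_fun hxy e
  let q : ι → ker (graphBoundary ℚ s t) := fun i =>
    ⟨cast (c i), by
      rw [mem_ker, show cast (c i) = Int.cast ∘ c i from rfl, graphBoundary_intCast,
        mem_ker.mp (hc i)]
      rfl⟩
  have hq : LinearIndependent ℤ q :=
    .of_comp ((ker (graphBoundary ℚ s t)).subtype.restrictScalars ℤ)
      (hli.map' cast (ker_eq_bot.mpr hcast))
  exact (LinearIndependent.iff_fractionRing ℤ ℚ).mp hq |>.fintype_card_le_finrank

end RationalCycles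

theorem stmt_15_general (Γ V E : Type) [Group Γ]
    [Fintype V] [Fintype E] [DecidableEq V]
    (s t : E → V)
    -- connectedness: any two vertices are joined by a chain of edges
    (hconn : ∀ v w : V,
      Relation.EqvGen (fun a b => ∃ e : E, (s e = a ∧ t e = b) ∨ (s e = b ∧ t e = a)) v w)
    [MulAction Γ V] [MulAction Γ E]
    (hs : ∀ (γ : Γ) (e : E), s (γ • e) = γ • s e)
    (ht : ∀ (γ : Γ) (e : E), t (γ • e) = γ • t e)
    -- the action is free (no fixed cells for nontrivial elements)
    (hfreeV : ∀ (γ : Γ) (v : V), γ • v = v → γ = 1)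
    (hfreeE : ∀ (γ : Γ) (e : E), γ • e = e → γ = 1)
    -- first Betti number at least 2: there are two linearly independent integral 1-cycles
    (hb2 : ∃ c₁ c₂ : E → ℤ,
      (∀ v : V, ∑ e : E, c₁ e * ((if t e = v then 1 else 0) - (if s e = v then 1 else 0)) = 0) ∧
      (∀ v : V, ∑ e : E, c₂ e * ((if t e = v then 1 else 0) - (if s e = v then 1 else 0)) = 0) ∧
      ∀ a b : ℤ, (fun e => a * c₁ e + b * c₂ e) = (0 : E → ℤ) → a = 0 ∧ b = 0) :
    ∀ γ : Γ, γ ≠ 1 → ∃ c : E → ℤ,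
      (∀ v : V, ∑ e : E, c e * ((if t e = v then 1 else 0) - (if s e = v then 1 else 0)) = 0)
      ∧ (fun e => c (γ⁻¹ • e)) ≠ c := by
  intro γ hγ
  by_contra! hfix
  obtain ⟨c₁, c₂, hc₁, hc₂, hli⟩ := hb2
  have two_le : 2 ≤ finrank ℚ (ker (graphBoundary ℚ s t)) := by
    simpa using card_le_finrank_ker_graphBoundary ![c₁, c₂]
      (Fin.forall_fin_two.mpr ⟨funext hc₁, funext hc₂⟩) (LinearIndependent.pair_iff.mpr hli)
  have hγ' : γ⁻¹ ≠ 1 := inv_ne_one.mpr hγ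
  have le_one := finrank_ker_graphBoundary_le_one hconn hs ht γ⁻¹
    (fun v h => hγ' (hfreeV _ v h)) (fun e h => hγ' (hfreeE _ e h))
    (funLeft_eq_self_of_forall_int_cycle _ fun c hc => hfix c (congr_fun hc))
  omega

/-- A finite group acting freely (and cellularly) on a finite connected graph with first
Betti number at least 2 acts faithfully on the first integral homology, i.e. on the
group of integral 1-cycles. -/
theorem stmt_15 (Γ V E : Type) [Group Γ] [Finite Γ]
    [Fintype V] [Fintype E] [Nonempty V] [DecidableEq V]
    (s t : E → V)
    -- connectedness: any two vertices are joined by a chain of edges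
    (hconn : ∀ v w : V,
      Relation.EqvGen (fun a b => ∃ e : E, (s e = a ∧ t e = b) ∨ (s e = b ∧ t e = a)) v w)
    [MulAction Γ V] [MulAction Γ E]
    (hs : ∀ (γ : Γ) (e : E), s (γ • e) = γ • s e)
    (ht : ∀ (γ : Γ) (e : E), t (γ • e) = γ • t e)
    -- the action is free (no fixed cells for nontrivial elements)
    (hfreeV : ∀ (γ : Γ) (v : V), γ • v = v → γ = 1)
    (hfreeE : ∀ (γ : Γ) (e : E), γ • e = e → γ = 1)
    -- first Betti number at least 2: there are two linearly independent integral 1-cycles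
    (hb2 : ∃ c₁ c₂ : E → ℤ,
      (∀ v : V, ∑ e : E, c₁ e * ((if t e = v then 1 else 0) - (if s e = v then 1 else 0)) = 0) ∧
      (∀ v : V, ∑ e : E, c₂ e * ((if t e = v then 1 else 0) - (if s e = v then 1 else 0)) = 0) ∧
      ∀ a b : ℤ, (fun e => a * c₁ e + b * c₂ e) = (0 : E → ℤ) → a = 0 ∧ b = 0) :
    ∀ γ : Γ, γ ≠ 1 → ∃ c : E → ℤ,
      (∀ v : V, ∑ e : E, c e * ((if t e = v then 1 else 0) - (if s e = v then 1 else 0)) = 0)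
      ∧ (fun e => c (γ⁻¹ • e)) ≠ c :=
  stmt_15_general Γ V E s t hconn hs ht hfreeV hfreeE hb2
end

section
/- Let F be a free group of finite rank n ≥ 2, let K ⊴ F be a normal subgroup of finite index with quotient Γ = F/K such that the rank of K (as a free group) is at least 2, and let ψ ∈ Aut(F) with ψ(K) = K. If the map induced by ψ on the abelianization K/[K,K] is the identity, then ψ induces the identity automorphism of Γ, i.e. ψ(w)w⁻¹ ∈ K for all w ∈ F. -/
/-!
Suppose `u ∉ K` acts trivially on `K/[K, K]`. The subgroup `H = ⟨K, u⟩` is free (Nielsen–Schreier)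
and `H/K` is cyclic, so there is a character `χ` of `H` trivial on `K` with `χ u ≠ 1`. A
`χ`-cocycle `D : H → k` is a homomorphism on `K`, hence kills `[K, K]`; as
`D ⁅u, γ⁆ = (χ u - 1) * D γ`, it vanishes on `K` and is therefore determined by `D u`. So the
cocycles form a space of dimension at most one. On the other hand a cocycle on a free group may
take arbitrary values on a basis, so `H` has rank at most one and `K ≤ H` is abelian.
-/

open scoped commutatorElement

open Subgroup

def unitsScaling (k : Type*) [Semiring k] : kˣ →* MulAut (Multiplicative k) where
  toFun a := (DistribMulAction.toAddAut kˣ k a).toMultiplicative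
  map_one' := by ext; simp
  map_mul' a b := by ext; simp [mul_smul]

section Cocycle

variable {k G : Type*} [Field k] [Group G]

def IsCocycle (χ : G →* kˣ) (D : G → k) : Prop :=
  ∀ g h, D (g * h) = D g + χ g * D h

namespace IsCocycle

variable {χ : G →* kˣ} {D : G → k}

theorem map_one (hD : IsCocycle χ D) : D 1 = 0 := by
  simpa using hD 1 1

theorem map_inv (hD : IsCocycle χ D) (g : G) : D g⁻¹ = -(χ g : k)⁻¹ * D g := by
  have h := hD g g⁻¹
  rw [mul_inv_cancel, hD.map_one] at h
  field_simp
  linear_combination -h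

theorem map_commutatorElement (hD : IsCocycle χ D) (a : G) {b : G} (hb : χ b = 1) :
    D ⁅a, b⁆ = (χ a - 1) * D b := by
  have hb' : (χ b : k) = 1 := by simp [hb]
  simp only [commutatorElement_def, hD _ _, hD.map_inv, map_mul, _root_.map_inv, Units.val_mul,
    Units.val_inv_eq_inv_val, hb']
  field_simp
  ring

def vanishingSubgroup (hD : IsCocycle χ D) : Subgroup G where
  carrier := {g | D g = 0}
  one_mem' := hD.map_one
  mul_mem' {a b} ha hb := by simp_all [hD a b]
  inv_mem' {a} ha := by simp_all [hD.map_inv a]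

theorem commutator_le_vanishingSubgroup (hD : IsCocycle χ D) {K : Subgroup G}
    (hK : K ≤ χ.ker) : ⁅K, K⁆ ≤ hD.vanishingSubgroup :=
  commutator_le.2 fun a ha b hb => by
    show D ⁅a, b⁆ = 0
    rw [hD.map_commutatorElement a (hK hb), MonoidHom.mem_ker.1 (hK ha), Units.val_one, sub_self,
      zero_mul]

theorem apply_eq_zero_of_commutatorElement_mem (hD : IsCocycle χ D) {K : Subgroup G}
    (hK : K ≤ χ.ker) {u : G} (hu : χ u ≠ 1) {γ : G} (hγ : γ ∈ K) (h : ⁅u, γ⁆ ∈ ⁅K, K⁆) :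
    D γ = 0 := by
  have h0 : D ⁅u, γ⁆ = 0 := hD.commutator_le_vanishingSubgroup hK h
  rw [hD.map_commutatorElement u (hK hγ)] at h0
  refine (mul_eq_zero.1 h0).resolve_left fun h1 => hu ?_
  rw [← Units.val_eq_one]
  linear_combination h1

theorem eq_zero_of_closure_eq_top (hD : IsCocycle χ D) {K : Subgroup G} (hK : K ≤ χ.ker)
    {u : G} (hu : χ u ≠ 1) (hcomm : ∀ γ ∈ K, ⁅u, γ⁆ ∈ ⁅K, K⁆) {S : Set G}
    (hS : closure S = ⊤) (hSK : S ⊆ insert u K) (hDu : D u = 0) : D = 0 := by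
  have hle : closure S ≤ hD.vanishingSubgroup := by
    rw [closure_le]
    rintro x hx
    rcases hSK hx with rfl | hx
    · exact hDu
    · exact hD.apply_eq_zero_of_commutatorElement_mem hK hu hx (hcomm x hx)
  rw [hS] at hle
  exact funext fun g => hle (mem_top g)

end IsCocycle

def cocycles (χ : G →* kˣ) : Submodule k (G → k) where
  carrier := {D | IsCocycle χ D}
  add_mem' {D E} hD hE g h := by simp only [Pi.add_apply, hD g h, hE g h]; ring
  zero_mem' g h := by simp
  smul_mem' c D hD g h := by simp only [Pi.smul_apply, smul_eq_mul, hD g h]; ring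

theorem mem_cocycles {χ : G →* kˣ} {D : G → k} : D ∈ cocycles χ ↔ IsCocycle χ D := Iff.rfl

-- A cocycle for `χ` is the translation part of a homomorphism into the affine group `k ⋊ kˣ`.
theorem FreeGroupBasis.exists_isCocycle_apply {ι : Type*} (b : FreeGroupBasis ι G)
    (χ : G →* kˣ) (d : ι → k) : ∃ D : G → k, IsCocycle χ D ∧ ∀ i, D (b i) = d i := by
  set ρ : G →* Multiplicative k ⋊[unitsScaling k] kˣ := b.lift fun i => ⟨.ofAdd (d i), χ (b i)⟩
  have hρ : SemidirectProduct.rightHom.comp ρ = χ := b.ext_hom _ _ fun i => by simp [ρ]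
  refine ⟨fun g => (ρ g).left.toAdd, fun g h => ?_, fun i => by simp [ρ]⟩
  simp only [map_mul, SemidirectProduct.mul_left, toAdd_mul, ← hρ]
  rfl

theorem FreeGroupBasis.subsingleton_of_forall_commutatorElement_mem {ι : Type*}
    (b : FreeGroupBasis ι G) (χ : G →* kˣ) {K : Subgroup G} (hK : K ≤ χ.ker) {u : G}
    (hu : χ u ≠ 1) (hcomm : ∀ γ ∈ K, ⁅u, γ⁆ ∈ ⁅K, K⁆) {S : Set G} (hS : closure S = ⊤)
    (hSK : S ⊆ insert u K) : Subsingleton ι := by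
  by_contra hι
  obtain ⟨i, j, hij⟩ := (not_subsingleton_iff_nontrivial.1 hι).exists_pair_ne
  let evalAt (g : G) : cocycles χ →ₗ[k] k := (LinearMap.proj g).comp (cocycles χ).subtype
  have hinj : Function.Injective (evalAt u) :=
    (injective_iff_map_eq_zero _).2 fun D hDu =>
      Subtype.ext ((mem_cocycles.1 D.2).eq_zero_of_closure_eq_top hK hu hcomm hS hSK hDu)
  have hsurj : Function.Surjective ((evalAt (b i)).prod (evalAt (b j))) := by
    classical
    rintro ⟨x, y⟩
    obtain ⟨D, hD, hDb⟩ := b.exists_isCocycle_apply χ fun l => if l = i then x else y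
    exact ⟨⟨D, hD⟩, by simp [evalAt, hDb, hij.symm]⟩
  have hrank := (LinearMap.lift_rank_le_of_surjective _ hsurj).trans
    (LinearMap.lift_rank_le_of_injective _ hinj)
  rw [rank_prod', Module.rank_self] at hrank
  norm_num at hrank

end Cocycle

section FreeGroup

variable {ι G : Type*} [Group G]

theorem FreeGroupBasis.commute_of_subsingleton [Subsingleton ι] (b : FreeGroupBasis ι G)
    (x y : G) : Commute x y := by
  have hcomm : IsMulCommutative (Subgroup.closure (Set.range (FreeGroup.of : ι → FreeGroup ι))) :=
    isMulCommutative_closure <| by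
      rintro _ ⟨i, rfl⟩ _ ⟨j, rfl⟩
      rw [Subsingleton.elim i j]
  have hmem (z : G) : b.repr z ∈ Subgroup.closure (Set.range FreeGroup.of) := by
    rw [FreeGroup.closure_range_of]; exact mem_top _
  refine Commute.of_map b.repr.injective ?_
  exact congrArg Subtype.val (mul_comm' (⟨_, hmem x⟩ : Subgroup.closure _) ⟨_, hmem y⟩)

theorem FreeGroupBasis.not_commute_of_ne (b : FreeGroupBasis ι G) {i j : ι} (hij : i ≠ j) :
    ¬Commute (b i) (b j) := by
  classical
  intro hc
  let f : ι → Equiv.Perm (Fin 3) := fun l => if l = i then Equiv.swap 0 1 else Equiv.swap 1 2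
  have hf := (hc.map b.repr).map (FreeGroup.lift f)
  simp only [FreeGroupBasis.repr_apply_coe, FreeGroup.lift_apply_of, f, ↓reduceIte,
    if_neg hij.symm] at hf
  exact absurd hf.eq (by decide)

end FreeGroup

theorem Subgroup.commutator_subgroupOf {G : Type*} [Group G] {K H : Subgroup G} (h : K ≤ H) :
    ⁅K.subgroupOf H, K.subgroupOf H⁆ = ⁅K, K⁆.subgroupOf H := by
  rw [← comap_map_eq_self_of_injective H.subtype_injective ⁅_, _⁆, map_commutator,
    subgroupOf_map_subtype, inf_of_le_left h]
  rfl

theorem Subgroup.exists_character_closure_insert {F : Type*} [Group F] (K : Subgroup F)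
    [K.Normal] [K.FiniteIndex] {u : F} (hu : u ∉ K) :
    ∃ χ : closure (insert u (K : Set F)) →* ℂˣ,
      K.subgroupOf _ ≤ χ.ker ∧ χ ⟨u, subset_closure (Set.mem_insert u _)⟩ ≠ 1 := by
  set q : F ⧸ K := QuotientGroup.mk u
  have : NeZero (Monoid.exponent (zpowers q) : ℂ) :=
    ⟨Nat.cast_ne_zero.2 Monoid.exponent_ne_zero_of_finite⟩
  open scoped IsMulCommutative in
  obtain ⟨χ₀, hχ₀⟩ := CommGroup.exists_apply_ne_one_of_hasEnoughRootsOfUnity (zpowers q) ℂ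
    (a := ⟨q, mem_zpowers q⟩) fun h => hu ((QuotientGroup.eq_one_iff u).1 (congrArg Subtype.val h))
  have hmaps : closure (insert u (K : Set F)) ≤ (zpowers q).comap (QuotientGroup.mk' K) := by
    rw [closure_le]
    rintro x (rfl | hx)
    · exact mem_zpowers q
    · simp [(QuotientGroup.eq_one_iff x).2 hx]
  let r := ((QuotientGroup.mk' K).comp (closure _).subtype).codRestrict _ fun x => mem_comap.1 (hmaps x.2)
  refine ⟨χ₀.comp r, fun x hx => ?_, hχ₀⟩
  have hr : r x = 1 := Subtype.ext ((QuotientGroup.eq_one_iff _).2 hx)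
  rw [MonoidHom.mem_ker, MonoidHom.comp_apply, hr, map_one]

theorem Subgroup.mem_of_forall_commutatorElement_mem {F : Type*} [Group F] [IsFreeGroup F]
    {K : Subgroup F} [K.Normal] [K.FiniteIndex] (hK : ∃ x ∈ K, ∃ y ∈ K, ¬Commute x y) {u : F}
    (hu : ∀ γ ∈ K, ⁅u, γ⁆ ∈ ⁅K, K⁆) : u ∈ K := by
  by_contra huK
  set H := closure (insert u (K : Set F))
  have hKH : K ≤ H := fun x hx => subset_closure (Set.mem_insert_of_mem u hx)
  set u' : H := ⟨u, subset_closure (Set.mem_insert u _)⟩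
  obtain ⟨χ, hχK, hχu⟩ := K.exists_character_closure_insert huK
  have hcomm : ∀ γ ∈ K.subgroupOf H, ⁅u', γ⁆ ∈ ⁅K.subgroupOf H, K.subgroupOf H⁆ := by
    rw [commutator_subgroupOf hKH]
    exact fun γ hγ => hu γ hγ
  have hSK : ((↑) : H → F) ⁻¹' insert u K ⊆ insert u' (K.subgroupOf H) := by
    rintro x (hx | hx)
    · exact Or.inl (Subtype.ext hx)
    · exact Or.inr hx
  have := (IsFreeGroup.basis H).subsingleton_of_forall_commutatorElement_mem χ hχK hχu hcomm
    closure_closure_coe_preimage hSK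
  obtain ⟨x, hx, y, hy, hxy⟩ := hK
  exact hxy (((IsFreeGroup.basis H).commute_of_subsingleton ⟨x, hKH hx⟩ ⟨y, hKH hy⟩).map
    H.subtype)

theorem commutatorElement_mem_of_forall_map_mul_inv_mem {G M : Type*} [Group G] [FunLike M G G]
    [MonoidHomClass M G G] {N K : Subgroup G} [N.Normal] [K.Normal] (ψ : M)
    (hψ : ∀ γ ∈ K, ψ γ * γ⁻¹ ∈ N) (w : G) {γ : G} (hγ : γ ∈ K) : ⁅ψ w * w⁻¹, γ⁆ ∈ N := by
  set γ' := w⁻¹ * γ * w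
  have hγ' : γ' ∈ K := by simpa using ‹K.Normal›.conj_mem γ hγ w⁻¹
  have key : ⁅ψ w * w⁻¹, γ⁆ = ψ w * (ψ γ' * γ'⁻¹)⁻¹ * (ψ w)⁻¹ * (ψ γ * γ⁻¹) := by
    simp only [γ', commutatorElement_def, map_mul, map_inv]
    group
  rw [key]
  exact N.mul_mem (‹N.Normal›.conj_mem _ (N.inv_mem (hψ γ' hγ')) _) (hψ γ hγ)

theorem stmt_16_general (n : ℕ)
    (K : Subgroup (FreeGroup (Fin n))) [K.Normal] [K.FiniteIndex]
    (ι : Type) [Nontrivial ι] (b : FreeGroupBasis ι ↥K)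
    (ψ : FreeGroup (Fin n) ≃* FreeGroup (Fin n))
    (hab : ∀ γ ∈ K, ψ γ * γ⁻¹ ∈ (⁅K, K⁆ : Subgroup (FreeGroup (Fin n)))) :
    ∀ w : FreeGroup (Fin n), ψ w * w⁻¹ ∈ K := by
  intro w
  obtain ⟨i, j, hij⟩ := exists_pair_ne ι
  have hK : ∃ x ∈ K, ∃ y ∈ K, ¬Commute x y :=
    ⟨b i, (b i).2, b j, (b j).2, fun h => b.not_commute_of_ne hij (Subtype.ext h)⟩
  exact Subgroup.mem_of_forall_commutatorElement_mem hK fun γ hγ => commutatorElement_mem_of_forall_map_mul_inv_mem ψ hab w hγ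

/-- If an automorphism `ψ` of a finite-rank free group `F` preserves a finite-index
normal subgroup `K` of rank at least 2 and induces the identity on the abelianization
`K/[K,K]`, then `ψ` induces the identity on the quotient `Γ = F/K`. -/
theorem stmt_16 (n : ℕ) (hn : 2 ≤ n)
    (K : Subgroup (FreeGroup (Fin n))) [K.Normal] [K.FiniteIndex]
    (ι : Type) [Nontrivial ι] (b : FreeGroupBasis ι ↥K)
    (ψ : FreeGroup (Fin n) ≃* FreeGroup (Fin n))
    (hK : K.map ψ.toMonoidHom = K)
    (hab : ∀ γ ∈ K, ψ γ * γ⁻¹ ∈ (⁅K, K⁆ : Subgroup (FreeGroup (Fin n)))) :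
    ∀ w : FreeGroup (Fin n), ψ w * w⁻¹ ∈ K :=
  stmt_16_general n K ι b ψ hab
end

section
/- Let F₂ be the free group on x₁, x₂. The element w = α⁻¹x₁α·x₂, where α = x₂x₁x₂⁻²x₁⁻², is not a primitive element of F₂ (it belongs to no free basis of F₂). Consequently, the endomorphism φ of F₂ defined by φ(x₁) = α⁻¹x₁α and φ(x₂) = x₂ is not surjective. -/
/-!
Send `x₁ ↦ (1 2)` and `x₂ ↦ (0 1)` in `S₃`. This map `ψ` kills `w`, yet `ψ x₁` and `ψ x₂` do not
commute. If `w` were primitive, then, since all bases of `F₂` have two elements, `F₂` would be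
generated by `w` and one further element `v`, so the image of `ψ` would lie in the cyclic group
generated by `ψ v`. For `φ`, the same argument applies to `ψ ∘ φ`, which kills `x₁x₂`, and
`{x₁x₂, x₂}` generates `F₂`; a surjective `φ` would make the image of `ψ` cyclic again.
-/

/-- An element of a group is primitive if it belongs to some free basis. -/
def IsPrimitiveElt {G : Type*} [Group G] (x : G) : Prop :=
  ∃ (ι : Type) (b : FreeGroupBasis ι G) (i : ι), b i = x

theorem FreeGroupBasis.closure_range_eq_top {ι G : Type*} [Group G] (b : FreeGroupBasis ι G) :
    Subgroup.closure (Set.range b) = ⊤ := by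
  have hlift : FreeGroup.lift b = b.repr.symm.toMonoidHom :=
    FreeGroup.ext_hom _ _ fun _ => by simp only [FreeGroup.lift_apply_of]; rfl
  rw [← FreeGroup.lift_surjective_iff_closure_range_eq_top, hlift]
  exact b.repr.symm.surjective

theorem IsPrimitiveElt.exists_closure_pair_eq_top {G : Type*} [Group G]
    (b₀ : FreeGroupBasis (Fin 2) G) {w : G} (hw : IsPrimitiveElt w) :
    ∃ v, Subgroup.closure {w, v} = ⊤ := by
  obtain ⟨ι, b, i, rfl⟩ := hw
  let e : ι ≃ Fin 2 := .ofFreeGroupEquiv (b.repr.symm.trans b₀.repr)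
  refine ⟨b (e.symm (e i + 1)), top_le_iff.1 ?_⟩
  rw [← b.closure_range_eq_top]
  refine Subgroup.closure_mono ?_
  rintro _ ⟨k, rfl⟩
  rcases (by omega : e k = e i ∨ e k = e i + 1) with h | h
  · exact .inl (by rw [e.injective h])
  · exact .inr (by rw [← h, e.symm_apply_apply]; rfl)

theorem commute_map_of_closure_pair_eq_top {G H : Type*} [Group G] [Group H] {w v : G}
    (hwv : Subgroup.closure {w, v} = ⊤) (ψ : G →* H) (hw : ψ w = 1) (g h : G) :
    Commute (ψ g) (ψ h) := by
  have hle : Subgroup.closure {w, v} ≤ (Subgroup.zpowers (ψ v)).comap ψ :=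
    (Subgroup.closure_le _).2 <| by
      rintro _ (rfl | rfl)
      · simp [hw]
      · exact Subgroup.mem_zpowers _
  obtain ⟨m, hm⟩ := hle (hwv ▸ Subgroup.mem_top g)
  obtain ⟨n, hn⟩ := hle (hwv ▸ Subgroup.mem_top h)
  rw [← hm, ← hn]
  exact Commute.zpow_zpow_self _ _ _

theorem Subgroup.closure_pair_mul_left {G : Type*} [Group G] (a b : G) :
    Subgroup.closure {a * b, b} = Subgroup.closure {a, b} := by
  have hab : a * b ∈ closure {a, b} :=
    mul_mem (subset_closure (.inl rfl)) (subset_closure (.inr rfl))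
  have ha : a ∈ closure {a * b, b} := by
    simpa using mul_mem (subset_closure (.inl rfl) : a * b ∈ closure {a * b, b})
      (inv_mem (subset_closure (.inr rfl) : b ∈ closure {a * b, b}))
  apply le_antisymm <;>
    simp only [closure_le, Set.insert_subset_iff, Set.singleton_subset_iff, SetLike.mem_coe]
  · exact ⟨hab, subset_closure (.inr rfl)⟩
  · exact ⟨ha, subset_closure (.inr rfl)⟩

theorem FreeGroup.closure_of_zero_of_one_eq_top :
    Subgroup.closure {FreeGroup.of (0 : Fin 2), FreeGroup.of 1} = ⊤ := by
  rw [← FreeGroup.closure_range_of]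
  congr 1
  ext g
  simp [Fin.exists_fin_two, eq_comm]

/-- In the free group `F₂ = F⟨x₁,x₂⟩`, with `α = x₂x₁x₂⁻²x₁⁻²`, the element
`w = α⁻¹x₁α·x₂` is not primitive; consequently the endomorphism `φ` with
`φ(x₁) = α⁻¹x₁α`, `φ(x₂) = x₂` is not surjective. -/
theorem stmt_17
    (x₁ x₂ α w : FreeGroup (Fin 2))
    (hx₁ : x₁ = FreeGroup.of 0) (hx₂ : x₂ = FreeGroup.of 1)
    (hα : α = x₂ * x₁ * x₂⁻¹ * x₂⁻¹ * x₁⁻¹ * x₁⁻¹)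
    (hw : w = α⁻¹ * x₁ * α * x₂)
    (φ : FreeGroup (Fin 2) →* FreeGroup (Fin 2))
    (hφ : φ = FreeGroup.lift ![α⁻¹ * x₁ * α, x₂]) :
    ¬ IsPrimitiveElt w ∧ ¬ Function.Surjective φ := by
  let ψ : FreeGroup (Fin 2) →* Equiv.Perm (Fin 3) :=
    FreeGroup.lift ![Equiv.swap 1 2, Equiv.swap 0 1]
  have hψw : ψ w = 1 := by
    subst hw hα hx₁ hx₂
    simp only [ψ, map_mul, map_inv, FreeGroup.lift_apply_of]
    decide
  have hψ : ¬ Commute (ψ x₁) (ψ x₂) := by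
    subst hx₁ hx₂
    simp only [ψ, FreeGroup.lift_apply_of, Commute, SemiconjBy]
    decide
  have hφw : φ (FreeGroup.of 0 * FreeGroup.of 1) = w := by
    simp [hφ, hw, hx₂]
  refine ⟨fun hprim => ?_, fun hsurj => ?_⟩
  · obtain ⟨v, hv⟩ := hprim.exists_closure_pair_eq_top (FreeGroupBasis.ofFreeGroup _)
    exact hψ (commute_map_of_closure_pair_eq_top hv ψ hψw x₁ x₂)
  · obtain ⟨g₁, rfl⟩ := hsurj x₁
    obtain ⟨g₂, rfl⟩ := hsurj x₂
    have hgen := (Subgroup.closure_pair_mul_left _ _).trans FreeGroup.closure_of_zero_of_one_eq_top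
    exact hψ (commute_map_of_closure_pair_eq_top hgen (ψ.comp φ) (by simp [hφw, hψw]) g₁ g₂)
end
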